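/- arXiv:1912.04028 — 3 statements merged into one kernel-verified Lean document; each statement's English description precedes it below -/
import Mathlib

section
/- Let g be a nilpotent non-unital dg algebra over a field k and Int the cellular interval dg algebra with basis a, b (degree 0), c (degree 1). Every element z of (g ⊗ Int)¹ can be written uniquely as z = z₁ ⊗ a + z₂ ⊗ b + h ⊗ c with z₁, z₂ ∈ g¹ and h ∈ g⁰, and z satisfies the Maurer-Cartan equation in g ⊗ Int if and only if z₁ and z₂ are Maurer-Cartan elements of g and d(h) = (1+h)z₁ - z₂(1+h) in the unitalization g_e. -/
/-!
STATEMENT 7: For a nilpotent non-unital dg algebra `g`, every degree-1 element of `g ⊗ Int`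
is uniquely of the form `z₁ ⊗ a + z₂ ⊗ b + h ⊗ c` with `z₁, z₂ ∈ g¹`, `h ∈ g⁰` (we model the
degree-1 part of `g ⊗ Int` as such triples), and such an element is Maurer-Cartan iff `z₁, z₂`
are Maurer-Cartan in `g` and `d(h) = (1+h) z₁ - z₂ (1+h)` in the unitalization `g_e`.

The differential and multiplication of `g ⊗ Int` on elements of total degree 1,
`z = z₁ ⊗ a + z₂ ⊗ b + h ⊗ c`, are computed from
`d(x⊗u) = d(x)⊗u + (-1)^{|x|} x⊗d(u)` and `(x⊗u)(y⊗v) = (-1)^{|u||y|} xy ⊗ uv`: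
`d z = (d z₁) ⊗ a + (d z₂) ⊗ b + (d h - z₁ + z₂) ⊗ c` and
`z w = (z₁ w₁) ⊗ a + (z₂ w₂) ⊗ b + (z₂ g - h w₁) ⊗ c`.
-/

variable {k A : Type*}

/-- A (not necessarily unital) differential graded associative algebra structure on `A`. -/
structure GradedDGA (k A : Type*) [Field k] [NonUnitalRing A] [Module k A] where
  grade : ℤ → Submodule k A
  mul_mem : ∀ {i j : ℤ} {a b : A}, a ∈ grade i → b ∈ grade j → a * b ∈ grade (i + j)
  d : A →ₗ[k] A
  d_mem : ∀ {i : ℤ} {a : A}, a ∈ grade i → d a ∈ grade (i + 1)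
  d_sq : ∀ a : A, d (d a) = 0
  leibniz : ∀ {i : ℤ} {a b : A}, a ∈ grade i →
    d (a * b) = d a * b + (((-1 : ℤˣ) ^ i : ℤˣ) : ℤ) • (a * d b)

/-- Product of `n+1` elements. -/
def nprod {A : Type*} [Mul A] : (n : ℕ) → (Fin (n + 1) → A) → A
  | 0, f => f 0
  | n + 1, f => nprod n (fun i => f i.castSucc) * f (Fin.last (n + 1))

/-- Nilpotence: some length of products vanishes identically. -/
def IsNilpotentAlg (A : Type*) [Mul A] [Zero A] : Prop :=
  ∃ n : ℕ, ∀ f : Fin (n + 1) → A, nprod n f = 0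

/-- The differential of `g ⊗ Int` on elements `z₁ ⊗ a + z₂ ⊗ b + h ⊗ c` of total degree 1. -/
def dTensorInt [Field k] [NonUnitalRing A] [Module k A] (D : GradedDGA k A)
    (t : A × A × A) : A × A × A :=
  (D.d t.1, D.d t.2.1, D.d t.2.2 - t.1 + t.2.1)

/-- The multiplication of `g ⊗ Int` on pairs of elements of total degree 1. -/
def mulTensorInt [NonUnitalRing A] (t s : A × A × A) : A × A × A :=
  (t.1 * s.1, t.2.1 * s.2.1, t.2.1 * s.2.2 - t.2.2 * s.1)

theorem stmt7 [Field k] [NonUnitalRing A] [Module k A]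
    [SMulCommClass k A A] [IsScalarTower k A A]
    (D : GradedDGA k A) (hnil : IsNilpotentAlg A)
    (z₁ z₂ h : A) (h1 : z₁ ∈ D.grade 1) (h2 : z₂ ∈ D.grade 1) (h0 : h ∈ D.grade 0) :
    -- uniqueness of the decomposition
    (∀ w₁ w₂ g : A, ((z₁, z₂, h) : A × A × A) = (w₁, w₂, g) ↔
      z₁ = w₁ ∧ z₂ = w₂ ∧ h = g) ∧
    -- the Maurer-Cartan equation in `g ⊗ Int`
    (dTensorInt D (z₁, z₂, h) + mulTensorInt (z₁, z₂, h) (z₁, z₂, h) = 0 ↔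
      (D.d z₁ + z₁ * z₁ = 0 ∧ D.d z₂ + z₂ * z₂ = 0 ∧
        (Unitization.inr (D.d h) : Unitization k A) =
          (1 + Unitization.inr h) * Unitization.inr z₁ -
            Unitization.inr z₂ * (1 + Unitization.inr h))) := by
  refine ⟨fun w₁ w₂ g => by simp [Prod.ext_iff], ?_⟩
  have key2 : ((Unitization.inr (D.d h) : Unitization k A) =
      (1 + Unitization.inr h) * Unitization.inr z₁ -
        Unitization.inr z₂ * (1 + Unitization.inr h)) ↔
      D.d h - z₁ + z₂ + (z₂ * h - h * z₁) = 0 := by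
    rw [mul_add, add_mul, one_mul, mul_one, ← Unitization.inr_mul, ← Unitization.inr_mul,
      ← Unitization.inr_add, ← Unitization.inr_add, ← Unitization.inr_sub,
      Unitization.inr_injective.eq_iff]
    constructor
    · intro hh; rw [hh]; abel
    · intro hh
      have e : D.d h - (z₁ + h * z₁ - (z₂ + z₂ * h)) =
          D.d h - z₁ + z₂ + (z₂ * h - h * z₁) := by abel
      exact sub_eq_zero.mp (by rw [e, hh])
  simp only [dTensorInt, mulTensorInt, Prod.ext_iff, Prod.fst_add, Prod.snd_add,
    Prod.fst_zero, Prod.snd_zero, key2]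
end

section
/- Let g be a nilpotent non-unital dg algebra over a field k. Two Maurer-Cartan elements x, y ∈ MC(g) are homotopic (i.e. there exists a Maurer-Cartan element z ∈ MC(g ⊗ Int) with evaluations x at one end and y at the other) if and only if they are gauge equivalent (i.e. there exists g ∈ 1 + g⁰ with y = gxg⁻¹ - d(g)g⁻¹). In particular, homotopy is an equivalence relation on MC(g). -/
/-!
STATEMENT 8: For a nilpotent non-unital dg algebra `g`, two Maurer-Cartan elements are
homotopic (connected by a Maurer-Cartan element of `g ⊗ Int`) iff they are gauge equivalent;
in particular homotopy is an equivalence relation on `MC(g)`.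
-/

variable {k A : Type*}

/-- `x` and `y` are homotopic: there is a Maurer-Cartan element
`z = x ⊗ a + y ⊗ b + h ⊗ c` of `g ⊗ Int` with evaluations `x` and `y` at the two endpoints. -/
def Homotopic [Field k] [NonUnitalRing A] [Module k A] (D : GradedDGA k A)
    (x y : A) : Prop :=
  ∃ h ∈ D.grade 0,
    dTensorInt D (x, y, h) + mulTensorInt (x, y, h) (x, y, h) = 0

/-- `x` and `y` are gauge equivalent: `y = g x g⁻¹ - d(g) g⁻¹` for some `g = 1 + i`,
`i ∈ g⁰`, invertible in the unitalization. -/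
def GaugeEquiv [Field k] [NonUnitalRing A] [Module k A] [SMulCommClass k A A]
    [IsScalarTower k A A] (D : GradedDGA k A) (x y : A) : Prop :=
  ∃ (i : A) (v : Unitization k A), i ∈ D.grade 0 ∧
    (1 + Unitization.inr i) * v = 1 ∧ v * (1 + Unitization.inr i) = 1 ∧
    (Unitization.inr y : Unitization k A) =
      (1 + Unitization.inr i) * Unitization.inr x * v - Unitization.inr (D.d i) * v

section Auxiliary

variable {k A : Type*}

/-- `pwr m a = a^(m+1)`. -/
private def pwr {A : Type*} [Mul A] : ℕ → A → A
  | 0, a => a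
  | m + 1, a => pwr m a * a

private lemma nprod_const {A : Type*} [Mul A] (n : ℕ) (a : A) :
    nprod n (fun _ => a) = pwr n a := by
  induction n with
  | zero => rfl
  | succ n ih =>
    show nprod n (fun _ => a) * a = pwr n a * a
    rw [ih]

private lemma pwr_add_zero {A : Type*} [MulZeroClass A] {m : ℕ} {a : A}
    (h : pwr m a = 0) (kk : ℕ) : pwr (m + kk) a = 0 := by
  induction kk with
  | zero => exact h
  | succ kk ih =>
    show pwr (m + kk) a * a = 0
    rw [ih, zero_mul]

private lemma pwr_sq {A : Type*} [Semigroup A] (m : ℕ) (a : A) :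
    pwr m (a * a) = pwr (2 * m + 1) a := by
  induction m with
  | zero => rfl
  | succ m ih =>
    have h1 : 2 * (m + 1) + 1 = (2 * m + 1) + 1 + 1 := by ring
    rw [h1]
    show pwr m (a * a) * (a * a) = (pwr (2 * m + 1) a * a) * a
    rw [ih, mul_assoc]

private lemma pwr_neg_or {A : Type*} [NonUnitalRing A] (m : ℕ) (a : A) :
    pwr m (-a) = pwr m a ∨ pwr m (-a) = -(pwr m a) := by
  induction m with
  | zero => exact Or.inr rfl
  | succ m ih =>
    rcases ih with h | h
    · right
      show pwr m (-a) * (-a) = -(pwr m a * a)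
      rw [h, mul_neg]
    · left
      show pwr m (-a) * (-a) = pwr m a * a
      rw [h, neg_mul, mul_neg, neg_neg]

private lemma pwr_neg_zero {A : Type*} [NonUnitalRing A] {m : ℕ} {a : A}
    (h : pwr m a = 0) : pwr m (-a) = 0 := by
  rcases pwr_neg_or m a with h' | h' <;> rw [h', h] <;> simp

variable [Field k] [NonUnitalRing A] [Module k A]

private lemma mul_mem0 (D : GradedDGA k A) {a b : A}
    (ha : a ∈ D.grade 0) (hb : b ∈ D.grade 0) : a * b ∈ D.grade 0 := by
  have := D.mul_mem ha hb
  norm_num at this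
  exact this

private lemma leib0 (D : GradedDGA k A) {a : A} (b : A) (ha : a ∈ D.grade 0) :
    D.d (a * b) = D.d a * b + a * D.d b := by
  have := D.leibniz (b := b) ha
  simpa using this

/-- Quasi-inverse: for nilpotent `a` in grade 0 there is a two-sided quasi-inverse. -/
private lemma qinv_aux (D : GradedDGA k A) :
    ∀ (m : ℕ) (a : A), a ∈ D.grade 0 → pwr m a = 0 →
      ∃ j ∈ D.grade 0, a + j + a * j = 0 ∧ a + j + j * a = 0 := by
  intro m
  induction m with
  | zero =>
    intro a _ h0
    have ha0 : a = 0 := h0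
    exact ⟨0, zero_mem _, by simp [ha0], by simp [ha0]⟩
  | succ m ih =>
    intro a ha h0
    set b : A := a * a with hb_def
    have hb : b ∈ D.grade 0 := mul_mem0 D ha ha
    have hbm : pwr m b = 0 := by
      rw [hb_def, pwr_sq]
      have : 2 * m + 1 = (m + 1) + m := by ring
      rw [this]
      exact pwr_add_zero h0 m
    obtain ⟨j', hj', hr', hl'⟩ := ih (-b) (neg_mem hb) (pwr_neg_zero hbm)
    set j : A := -a + j' - a * j' with hj_def
    set jl : A := -a + j' - j' * a with hjl_def
    have hjmem : j ∈ D.grade 0 :=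
      sub_mem (add_mem (neg_mem ha) hj') (mul_mem0 D ha hj')
    have hr : a + j + a * j = 0 := by
      have expand : a + j + a * j = (-b) + j' + (-b) * j' := by
        rw [hj_def, hb_def]
        linear_combination (norm := noncomm_ring) (mul_assoc a a j' : _)
      rw [expand, hr']
    have hl : a + jl + jl * a = 0 := by
      have expand : a + jl + jl * a = (-b) + j' + j' * (-b) := by
        rw [hjl_def, hb_def]
        linear_combination (norm := noncomm_ring) (mul_assoc j' a a : _)
      rw [expand, hl']
    -- show jl = j
    have e1 : jl * a + (jl * j + jl * (a * j)) = 0 := by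
      have : jl * (a + j + a * j) = 0 := by rw [hr, mul_zero]
      linear_combination (norm := noncomm_ring) this
    have e2 : a * j + (jl * j + jl * (a * j)) = 0 := by
      have : (a + jl + jl * a) * j = 0 := by rw [hl, zero_mul]
      linear_combination (norm := noncomm_ring) this + (mul_assoc jl a j : _)
    have e3 : jl * a = a * j := add_right_cancel (e1.trans e2.symm)
    have ejl : jl = j := by
      have h1 : a + jl + a * j = 0 := by rw [← e3]; exact hl
      have h2 : a + j + a * j = 0 := hr
      have := h1.trans h2.symm
      exact add_left_cancel (add_right_cancel this)
    exact ⟨j, hjmem, hr, by rw [← ejl]; exact hl⟩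

private lemma qinv (D : GradedDGA k A) (hnil : IsNilpotentAlg A) {a : A}
    (ha : a ∈ D.grade 0) :
    ∃ j ∈ D.grade 0, a + j + a * j = 0 ∧ a + j + j * a = 0 := by
  obtain ⟨n, hn⟩ := hnil
  have : pwr n a = 0 := by rw [← nprod_const]; exact hn _
  exact qinv_aux D n a ha this

end Auxiliary

section Main

variable {k A : Type*} [Field k] [NonUnitalRing A] [Module k A]
  [SMulCommClass k A A] [IsScalarTower k A A]

private lemma inr_sub' (x y : A) :
    ((x - y : A) : Unitization k A) = (x : Unitization k A) - y := by
  rw [sub_eq_add_neg, Unitization.inr_add, Unitization.inr_neg, sub_eq_add_neg]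

private lemma inr_zero_iff {x : A} : x = 0 ↔ ((x : Unitization k A) = 0) :=
  ⟨fun h => by rw [h, Unitization.inr_zero],
   fun h => Unitization.inr_injective (by simpa using h)⟩

private lemma rel_iff (D : GradedDGA k A) (i x y : A) :
    D.d i - x + y + (y * i - i * x) = 0 ↔
      (y : Unitization k A) * (1 + (i : Unitization k A)) =
        (1 + (i : Unitization k A)) * (x : Unitization k A) - (D.d i : Unitization k A) := by
  rw [inr_zero_iff (k := k)]
  simp only [inr_sub', Unitization.inr_add, Unitization.inr_mul]
  constructor <;> (intro h; linear_combination (norm := noncomm_ring) h)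

private lemma homotopic_iff (D : GradedDGA k A) (x y : A) :
    Homotopic D x y ↔ (D.d x + x * x = 0 ∧ D.d y + y * y = 0 ∧
      ∃ h ∈ D.grade 0, D.d h - x + y + (y * h - h * x) = 0) := by
  unfold Homotopic dTensorInt mulTensorInt
  simp only [Prod.mk_add_mk, Prod.mk_eq_zero]
  constructor
  · rintro ⟨h, hh, hp, hq, he⟩
    exact ⟨hp, hq, h, hh, he⟩
  · rintro ⟨hp, hq, h, hh, he⟩
    exact ⟨h, hh, hp, hq, he⟩

end Main

theorem stmt8 [Field k] [NonUnitalRing A] [Module k A]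
    [SMulCommClass k A A] [IsScalarTower k A A]
    (D : GradedDGA k A) (hnil : IsNilpotentAlg A) :
    (∀ x y : A, x ∈ D.grade 1 → D.d x + x * x = 0 → y ∈ D.grade 1 → D.d y + y * y = 0 →
      (Homotopic D x y ↔ GaugeEquiv (k := k) D x y)) ∧
    Equivalence (fun a b : {x : A // x ∈ D.grade 1 ∧ D.d x + x * x = 0} =>
      Homotopic D a.1 b.1) := by
  constructor
  · intro x y hx hmcx hy hmcy
    constructor
    · intro hH
      rw [homotopic_iff] at hH
      obtain ⟨-, -, i, hi, hE⟩ := hH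
      obtain ⟨j, hj, hij, hji⟩ := qinv D hnil hi
      have hgv : (1 + (i : Unitization k A)) * (1 + (j : Unitization k A)) = 1 := by
        have h0 : ((i + j + i * j : A) : Unitization k A) = 0 := by
          rw [hij, Unitization.inr_zero]
        simp only [Unitization.inr_add, Unitization.inr_mul] at h0
        linear_combination (norm := noncomm_ring) h0
      have hvg : (1 + (j : Unitization k A)) * (1 + (i : Unitization k A)) = 1 := by
        have h0 : ((i + j + j * i : A) : Unitization k A) = 0 := by
          rw [hji, Unitization.inr_zero]
        simp only [Unitization.inr_add, Unitization.inr_mul] at h0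
        linear_combination (norm := noncomm_ring) h0
      have hk := (rel_iff D i x y).mp hE
      refine ⟨i, 1 + (j : Unitization k A), hi, hgv, hvg, ?_⟩
      linear_combination (norm := noncomm_ring)
        hk * (1 + (j : Unitization k A)) - (y : Unitization k A) * hgv
    · rintro ⟨i, v, hi, hgv, hvg, heq⟩
      rw [homotopic_iff]
      refine ⟨hmcx, hmcy, i, hi, ?_⟩
      rw [rel_iff D i x y]
      linear_combination (norm := noncomm_ring)
        heq * (1 + (i : Unitization k A))
          + ((1 + (i : Unitization k A)) * (x : Unitization k A)) * hvg
          - (D.d i : Unitization k A) * hvg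
  · constructor
    · rintro ⟨x, hx, hmc⟩
      rw [homotopic_iff]
      exact ⟨hmc, hmc, 0, zero_mem _, by simp⟩
    · rintro ⟨x, hx, hmcx⟩ ⟨y, hy, hmcy⟩ hH
      rw [homotopic_iff] at hH ⊢
      obtain ⟨-, -, i, hi, hE⟩ := hH
      obtain ⟨j, hj, hij, hji⟩ := qinv D hnil hi
      refine ⟨hmcy, hmcx, j, hj, ?_⟩
      have hd : D.d i + D.d j + (D.d i * j + i * D.d j) = 0 := by
        have h1 : D.d (i + j + i * j) = 0 := by rw [hij, map_zero]
        rwa [map_add, map_add, leib0 D j hi] at h1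
      have hgv : (1 + (i : Unitization k A)) * (1 + (j : Unitization k A)) = 1 := by
        have h0 : ((i + j + i * j : A) : Unitization k A) = 0 := by
          rw [hij, Unitization.inr_zero]
        simp only [Unitization.inr_add, Unitization.inr_mul] at h0
        linear_combination (norm := noncomm_ring) h0
      have hvg : (1 + (j : Unitization k A)) * (1 + (i : Unitization k A)) = 1 := by
        have h0 : ((i + j + j * i : A) : Unitization k A) = 0 := by
          rw [hji, Unitization.inr_zero]
        simp only [Unitization.inr_add, Unitization.inr_mul] at h0
        linear_combination (norm := noncomm_ring) h0
      have hkB := (rel_iff D i x y).mp hE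
      have hdB : (D.d i : Unitization k A) + (D.d j : Unitization k A)
          + ((D.d i : Unitization k A) * (j : Unitization k A)
            + (i : Unitization k A) * (D.d j : Unitization k A)) = 0 := by
        have h0 : ((D.d i + D.d j + (D.d i * j + i * D.d j) : A) : Unitization k A) = 0 := by
          rw [hd, Unitization.inr_zero]
        simpa only [Unitization.inr_add, Unitization.inr_mul] using h0
      rw [rel_iff D j y x]
      linear_combination (norm := noncomm_ring)
        (1 + (j : Unitization k A)) * hdB
          - (1 + (j : Unitization k A)) * hkB * (1 + (j : Unitization k A))
          + ((1 + (j : Unitization k A)) * (y : Unitization k A)) * hgv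
          - hvg * ((D.d j : Unitization k A)
              + (x : Unitization k A) * (1 + (j : Unitization k A)))
    · rintro ⟨x, hx, hmcx⟩ ⟨y, hy, hmcy⟩ ⟨z, hz, hmcz⟩ h1 h2
      rw [homotopic_iff] at h1 h2 ⊢
      obtain ⟨-, -, i1, hi1, hE1⟩ := h1
      obtain ⟨-, -, i2, hi2, hE2⟩ := h2
      refine ⟨hmcx, hmcz, i1 + i2 + i2 * i1,
        add_mem (add_mem hi1 hi2) (mul_mem0 D hi2 hi1), ?_⟩
      have hd3 : D.d (i1 + i2 + i2 * i1)
          = D.d i1 + D.d i2 + (D.d i2 * i1 + i2 * D.d i1) := by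
        rw [map_add, map_add, leib0 D i1 hi2]
      have hk1 := (rel_iff D i1 x y).mp hE1
      have hk2 := (rel_iff D i2 y z).mp hE2
      rw [rel_iff D (i1 + i2 + i2 * i1) x z, hd3]
      simp only [Unitization.inr_add, Unitization.inr_mul]
      linear_combination (norm := noncomm_ring)
        hk2 * (1 + (i1 : Unitization k A)) + (1 + (i2 : Unitization k A)) * hk1
end

section
/- Let C be a model category in which every object is fibrant. Then C is right proper: for every pullback square with vertices A, B, C, D where the map C → D is a fibration and the map B → D is a weak equivalence, the induced map A → C is also a weak equivalence. -/
/-!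
STATEMENT 17: In a (closed) model category in which every object is fibrant, the model
structure is right proper: in any pullback square in which one leg is a fibration and the
parallel leg of the other pair is a weak equivalence, the pulled-back map is also a weak
equivalence.
-/

open CategoryTheory CategoryTheory.Limits

universe v u

/-- `f` is a retract of `g` (in the arrow category). -/
def IsRetractOf {C : Type u} [Category.{v} C] {X Y X' Y' : C}
    (f : X ⟶ Y) (g : X' ⟶ Y') : Prop :=
  ∃ (i : X ⟶ X') (r : X' ⟶ X) (j : Y ⟶ Y') (s : Y' ⟶ Y),
    i ≫ r = 𝟙 X ∧ j ≫ s = 𝟙 Y ∧ i ≫ g = f ≫ j ∧ g ≫ s = r ≫ f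

/-- A (closed) model structure on a category `C` (which is assumed to have all limits and
colimits, axiom MC1): classes of weak equivalences, fibrations and cofibrations, closed under
composition and containing identities, satisfying two-out-of-three (MC2), closure under
retracts (MC3), the lifting axioms (MC4) and the factorization axioms (MC5). -/
structure ModelStructure (C : Type u) [Category.{v} C] where
  W : MorphismProperty C
  F : MorphismProperty C
  Cof : MorphismProperty C
  W_id : ∀ X : C, W (𝟙 X)
  F_id : ∀ X : C, F (𝟙 X)
  Cof_id : ∀ X : C, Cof (𝟙 X)
  F_comp : ∀ {X Y Z : C} (f : X ⟶ Y) (g : Y ⟶ Z), F f → F g → F (f ≫ g)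
  Cof_comp : ∀ {X Y Z : C} (f : X ⟶ Y) (g : Y ⟶ Z), Cof f → Cof g → Cof (f ≫ g)
  -- MC2
  two_three_comp : ∀ {X Y Z : C} (f : X ⟶ Y) (g : Y ⟶ Z), W f → W g → W (f ≫ g)
  two_three_left : ∀ {X Y Z : C} (f : X ⟶ Y) (g : Y ⟶ Z), W (f ≫ g) → W f → W g
  two_three_right : ∀ {X Y Z : C} (f : X ⟶ Y) (g : Y ⟶ Z), W (f ≫ g) → W g → W f
  -- MC3
  W_retract : ∀ {X Y X' Y' : C} (f : X ⟶ Y) (g : X' ⟶ Y'), IsRetractOf f g → W g → W f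
  F_retract : ∀ {X Y X' Y' : C} (f : X ⟶ Y) (g : X' ⟶ Y'), IsRetractOf f g → F g → F f
  Cof_retract : ∀ {X Y X' Y' : C} (f : X ⟶ Y) (g : X' ⟶ Y'), IsRetractOf f g → Cof g → Cof f
  -- MC4
  lift_acof_fib : ∀ {A B X Y : C} (i : A ⟶ B) (p : X ⟶ Y) (f : A ⟶ X) (g : B ⟶ Y),
    Cof i → W i → F p → i ≫ g = f ≫ p → ∃ h : B ⟶ X, i ≫ h = f ∧ h ≫ p = g
  lift_cof_afib : ∀ {A B X Y : C} (i : A ⟶ B) (p : X ⟶ Y) (f : A ⟶ X) (g : B ⟶ Y),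
    Cof i → F p → W p → i ≫ g = f ≫ p → ∃ h : B ⟶ X, i ≫ h = f ∧ h ≫ p = g
  -- MC5
  fact_acof_fib : ∀ {X Y : C} (f : X ⟶ Y),
    ∃ (Z : C) (i : X ⟶ Z) (p : Z ⟶ Y), Cof i ∧ W i ∧ F p ∧ i ≫ p = f
  fact_cof_afib : ∀ {X Y : C} (f : X ⟶ Y),
    ∃ (Z : C) (i : X ⟶ Z) (p : Z ⟶ Y), Cof i ∧ F p ∧ W p ∧ i ≫ p = f

section Aux

variable {C : Type u} [Category.{v} C]

/-- A map with the right lifting property against all acyclic cofibrations is a fibration. -/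
lemma fib_of_rlp (M : ModelStructure C) {X Y : C} (p : X ⟶ Y)
    (h : ∀ {A B : C} (m : A ⟶ B) (f : A ⟶ X) (g : B ⟶ Y), M.Cof m → M.W m →
      m ≫ g = f ≫ p → ∃ l : B ⟶ X, m ≫ l = f ∧ l ≫ p = g) : M.F p := by
  obtain ⟨Z, i, q, hi, hwi, hq, hfac⟩ := M.fact_acof_fib p
  obtain ⟨l, hl1, hl2⟩ := h i (𝟙 X) q hi hwi (by rw [hfac, Category.id_comp])
  exact M.F_retract p q ⟨i, l, 𝟙 _, 𝟙 _, hl1, by simp, by simp [hfac], by simp [hl2]⟩ hq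

/-- A map with the right lifting property against all cofibrations is an acyclic fibration. -/
lemma trivfib_of_rlp (M : ModelStructure C) {X Y : C} (p : X ⟶ Y)
    (h : ∀ {A B : C} (m : A ⟶ B) (f : A ⟶ X) (g : B ⟶ Y), M.Cof m →
      m ≫ g = f ≫ p → ∃ l : B ⟶ X, m ≫ l = f ∧ l ≫ p = g) : M.F p ∧ M.W p := by
  obtain ⟨Z, i, q, hi, hq, hwq, hfac⟩ := M.fact_cof_afib p
  obtain ⟨l, hl1, hl2⟩ := h i (𝟙 X) q hi (by rw [hfac, Category.id_comp])
  have hret : IsRetractOf p q := ⟨i, l, 𝟙 _, 𝟙 _, hl1, by simp, by simp [hfac], by simp [hl2]⟩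
  exact ⟨M.F_retract p q hret hq, M.W_retract p q hret hwq⟩

/-- The pullback of a fibration is a fibration. -/
lemma fib_pullback (M : ModelStructure C) {P X Y Z : C} {fst : P ⟶ X} {snd : P ⟶ Y}
    {f : X ⟶ Z} {g : Y ⟶ Z} (hP : IsPullback fst snd f g) (hg : M.F g) : M.F fst := by
  apply fib_of_rlp M
  intro A B m a b hcof hw hsq
  obtain ⟨l, hl1, hl2⟩ := M.lift_acof_fib m g (a ≫ snd) (b ≫ f) hcof hw hg
    (by rw [← Category.assoc, hsq, Category.assoc, Category.assoc, hP.w])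
  refine ⟨hP.lift b l hl2.symm, ?_, hP.lift_fst _ _ _⟩
  apply hP.hom_ext
  · rw [Category.assoc, hP.lift_fst, hsq]
  · rw [Category.assoc, hP.lift_snd, hl1]

/-- The pullback of an acyclic fibration is an acyclic fibration. -/
lemma trivfib_pullback (M : ModelStructure C) {P X Y Z : C} {fst : P ⟶ X} {snd : P ⟶ Y}
    {f : X ⟶ Z} {g : Y ⟶ Z} (hP : IsPullback fst snd f g) (hg : M.F g) (hwg : M.W g) :
    M.F fst ∧ M.W fst := by
  apply trivfib_of_rlp M
  intro A B m a b hcof hsq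
  obtain ⟨l, hl1, hl2⟩ := M.lift_cof_afib m g (a ≫ snd) (b ≫ f) hcof hg hwg
    (by rw [← Category.assoc, hsq, Category.assoc, Category.assoc, hP.w])
  refine ⟨hP.lift b l hl2.symm, ?_, hP.lift_fst _ _ _⟩
  apply hP.hom_ext
  · rw [Category.assoc, hP.lift_fst, hsq]
  · rw [Category.assoc, hP.lift_snd, hl1]

end Aux

/-- Key lemma: in a model category with all objects fibrant, the pullback of an acyclic
cofibration along a fibration is a weak equivalence. -/
lemma pullback_acof_along_fib (C : Type u) [Category.{v} C] [HasLimits C]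
    (M : ModelStructure C) (hfib : ∀ X : C, M.F (terminal.from X))
    {P B E Q : C} {t : P ⟶ B} {j : P ⟶ Q} {i : B ⟶ E} {u : Q ⟶ E}
    (hP : IsPullback t j i u) (hic : M.Cof i) (hiw : M.W i) (hu : M.F u) : M.W j := by
  -- a retraction `r` of `i`, using that `B` is fibrant
  obtain ⟨r, hri, -⟩ := M.lift_acof_fib i (terminal.from B) (𝟙 B) (terminal.from E)
    hic hiw (hfib B) (by apply terminal.hom_ext)
  -- a path object for `E`
  obtain ⟨PE, c, π, hcc, hcw, hπ, hπfac⟩ := M.fact_acof_fib (prod.lift (𝟙 E) (𝟙 E))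
  set π0 : PE ⟶ E := π ≫ prod.fst with hπ0def
  set π1 : PE ⟶ E := π ≫ prod.snd with hπ1def
  have hcπ0 : c ≫ π0 = 𝟙 E := by rw [hπ0def, ← Category.assoc, hπfac, prod.lift_fst]
  have hcπ1 : c ≫ π1 = 𝟙 E := by rw [hπ1def, ← Category.assoc, hπfac, prod.lift_snd]
  -- `prod.snd : E ⨯ E ⟶ E` is a fibration (pullback of a fibration)
  have hsndF : M.F (prod.snd : E ⨯ E ⟶ E) :=
    fib_pullback M (IsPullback.of_hasBinaryProduct' E E).flip (hfib E)
  have hπ1F : M.F π1 := M.F_comp π prod.snd hπ hsndF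
  have hπ1W : M.W π1 := M.two_three_left c π1 (by rw [hcπ1]; exact M.W_id E) hcw
  -- the homotopy `H : E ⟶ PE` from `r ≫ i` to `𝟙 E`, constant on `B`
  obtain ⟨H, hH1, hH2⟩ := M.lift_acof_fib i π (i ≫ c) (prod.lift (r ≫ i) (𝟙 E)) hic hiw hπ
    (by rw [prod.comp_lift, ← Category.assoc, hri, Category.id_comp, Category.comp_id,
        Category.assoc, hπfac, prod.comp_lift, Category.comp_id])
  have hHπ0 : H ≫ π0 = r ≫ i := by rw [hπ0def, ← Category.assoc, hH2, prod.lift_fst]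
  have hHπ1 : H ≫ π1 = 𝟙 E := by rw [hπ1def, ← Category.assoc, hH2, prod.lift_snd]
  -- `S = Q ×_E PE` (pairs `(q, path ending at u q)`)
  set ρ : pullback u π1 ⟶ Q := pullback.fst u π1 with hρdef
  set pr : pullback u π1 ⟶ PE := pullback.snd u π1 with hprdef
  have hS : IsPullback ρ pr u π1 := IsPullback.of_hasPullback u π1
  obtain ⟨hρF, hρW⟩ := trivfib_pullback M hS hπ1F hπ1W
  set ν : pullback u π1 ⟶ E := pr ≫ π0 with hνdef
  -- the section of `ρ` given by constant paths
  have hs0c : (𝟙 Q) ≫ u = (u ≫ c) ≫ π1 := by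
    rw [Category.id_comp, Category.assoc, hcπ1, Category.comp_id]
  set s0 : Q ⟶ pullback u π1 := pullback.lift (𝟙 Q) (u ≫ c) hs0c with hs0def
  have hs0ρ : s0 ≫ ρ = 𝟙 Q := pullback.lift_fst _ _ _
  have hs0pr : s0 ≫ pr = u ≫ c := pullback.lift_snd _ _ _
  have hs0W : M.W s0 := M.two_three_right s0 ρ (by rw [hs0ρ]; exact M.W_id Q) hρW
  -- factor `s0` as an acyclic cofibration followed by a fibration
  obtain ⟨T, sc, sf, hscC, hscW, hsfF, hsfac⟩ := M.fact_acof_fib s0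
  have hsfW : M.W sf := M.two_three_left sc sf (by rw [hsfac]; exact hs0W) hscW
  -- `Λ : T ⟶ Q`, "initial point of the lifted path"
  obtain ⟨Λ, hΛ1, hΛ2⟩ := M.lift_acof_fib sc u (𝟙 Q) (sf ≫ ν) hscC hscW hu
    (by rw [← Category.assoc, hsfac, hνdef, ← Category.assoc, hs0pr,
        Category.assoc, hcπ0, Category.comp_id, Category.id_comp])
  have hΛW : M.W Λ := M.two_three_left sc Λ (by rw [hΛ1]; exact M.W_id Q) hscW
  -- `e1 : T ⟶ Q`: the other endpoint
  set e1 : T ⟶ Q := sf ≫ ρ with he1def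
  have he1W : M.W e1 := M.two_three_comp sf ρ hsfW hρW
  -- the section `σ` of `ρ` given by the homotopy `H`
  have hσc : (𝟙 Q) ≫ u = (u ≫ H) ≫ π1 := by
    rw [Category.id_comp, Category.assoc, hHπ1, Category.comp_id]
  set σ : Q ⟶ pullback u π1 := pullback.lift (𝟙 Q) (u ≫ H) hσc with hσdef
  have hσρ : σ ≫ ρ = 𝟙 Q := pullback.lift_fst _ _ _
  have hσpr : σ ≫ pr = u ≫ H := pullback.lift_snd _ _ _
  -- factor `j` as a cofibration `a` followed by an acyclic fibration `b`
  obtain ⟨Y, a, b, haC, hbF, hbW, hab⟩ := M.fact_cof_afib j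
  -- `j ≫ σ = j ≫ s0` since the homotopy is constant on `B`
  have hjσ : j ≫ σ = j ≫ s0 := by
    apply pullback.hom_ext
    · rw [Category.assoc, Category.assoc, ← hρdef, hσρ, hs0ρ]
    · rw [Category.assoc, Category.assoc, ← hprdef, hσpr, hs0pr, ← Category.assoc,
        ← Category.assoc, ← hP.w, Category.assoc, Category.assoc, hH1]
  -- the lifted homotopy `K : Y ⟶ T`
  obtain ⟨K, hK1, hK2⟩ := M.lift_cof_afib a sf (j ≫ sc) (b ≫ σ) haC hsfF hsfW
    (by rw [← Category.assoc, hab, hjσ, Category.assoc, hsfac])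
  set β : Y ⟶ Q := K ≫ Λ with hβdef
  have hKe1 : K ≫ e1 = b := by
    rw [he1def, ← Category.assoc, hK2, Category.assoc, hσρ, Category.comp_id]
  have hKW : M.W K := M.two_three_right K e1 (by rw [hKe1]; exact hbW) he1W
  have hβW : M.W β := M.two_three_comp K Λ hKW hΛW
  have hσν : σ ≫ ν = u ≫ r ≫ i := by
    rw [hνdef, ← Category.assoc, hσpr, Category.assoc, hHπ0]
  have hβu : β ≫ u = b ≫ u ≫ r ≫ i := by
    rw [hβdef, Category.assoc, hΛ2, ← Category.assoc, hK2, Category.assoc, hσν]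
  -- the retraction `w : Y ⟶ P`
  have hwc : (b ≫ u ≫ r) ≫ i = β ≫ u := by rw [hβu]; simp only [Category.assoc]
  set w : Y ⟶ P := hP.lift (b ≫ u ≫ r) β hwc with hwdef
  have hwt : w ≫ t = b ≫ u ≫ r := hP.lift_fst _ _ _
  have hwj : w ≫ j = β := hP.lift_snd _ _ _
  have habu : a ≫ b ≫ u = t ≫ i := by rw [← Category.assoc, hab, hP.w]
  have hawid : a ≫ w = 𝟙 P := by
    apply hP.hom_ext
    · calc (a ≫ w) ≫ t = a ≫ b ≫ u ≫ r := by rw [Category.assoc, hwt]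
        _ = (a ≫ b ≫ u) ≫ r := by simp only [Category.assoc]
        _ = (t ≫ i) ≫ r := by rw [habu]
        _ = t := by rw [Category.assoc, hri, Category.comp_id]
        _ = 𝟙 P ≫ t := by rw [Category.id_comp]
    · calc (a ≫ w) ≫ j = a ≫ β := by rw [Category.assoc, hwj]
        _ = (a ≫ K) ≫ Λ := by rw [hβdef, Category.assoc]
        _ = j ≫ sc ≫ Λ := by rw [hK1, Category.assoc]
        _ = j := by rw [hΛ1, Category.comp_id]
        _ = 𝟙 P ≫ j := by rw [Category.id_comp]
  have hwaW : M.W (w ≫ a) := by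
    refine M.two_three_right (w ≫ a) b ?_ hbW
    rw [Category.assoc, hab, hwj]
    exact hβW
  have haW : M.W a := by
    refine M.W_retract a (w ≫ a) ⟨a, w, 𝟙 Y, 𝟙 Y, hawid, by simp, ?_, by simp⟩ hwaW
    rw [← Category.assoc, hawid, Category.id_comp, Category.comp_id]
  rw [← hab]
  exact M.two_three_comp a b haW hbW

theorem stmt17 (C : Type u) [Category.{v} C] [HasLimits C] [HasColimits C]
    (M : ModelStructure C)
    -- every object is fibrant
    (hfib : ∀ X : C, M.F (terminal.from X)) :
    -- right properness: in a pullback square `t ≫ g = f ≫ p` with `p` a fibration and `g`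
    -- a weak equivalence, the map `f` is a weak equivalence
    ∀ {P B X Z : C} (t : P ⟶ B) (f : P ⟶ X) (g : B ⟶ Z) (p : X ⟶ Z),
      IsPullback t f g p → M.F p → M.W g → M.W f := by
  intro P B X Z t f g p hPB hFp hWg
  obtain ⟨E, i, q, hiC, hiW, hqF, hgfac⟩ := M.fact_acof_fib g
  have hqW : M.W q := M.two_three_left i q (by rw [hgfac]; exact hWg) hiW
  have hQ : IsPullback (pullback.fst q p) (pullback.snd q p) q p := IsPullback.of_hasPullback q p
  have huF : M.F (pullback.fst q p) := fib_pullback M hQ hFp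
  obtain ⟨hvF, hvW⟩ := trivfib_pullback M hQ.flip hqF hqW
  have hjc : (t ≫ i) ≫ q = f ≫ p := by rw [Category.assoc, hgfac, hPB.w]
  set j : P ⟶ pullback q p := pullback.lift (t ≫ i) f hjc with hjdef
  have hju : j ≫ pullback.fst q p = t ≫ i := pullback.lift_fst _ _ _
  have hjv : j ≫ pullback.snd q p = f := pullback.lift_snd _ _ _
  have hs : IsPullback t (j ≫ pullback.snd q p) (i ≫ q) p := by rw [hjv, hgfac]; exact hPB
  have hleft : IsPullback t j i (pullback.fst q p) := IsPullback.of_bot hs hju.symm hQ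
  have hjW : M.W j := pullback_acof_along_fib C M hfib hleft hiC hiW huF
  have := M.two_three_comp j (pullback.snd q p) hjW hvW
  rwa [hjv] at this
end
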